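/- Stein's lemma. Let N be a standard Gaussian random variable and let h : ℝ → [0,1] be a continuous function. Define f : ℝ → ℝ by f(x) = e^{x²/2} ∫_{−∞}^x (h(a) − E[h(N)]) e^{−a²/2} da. Then f is of class C¹, |f(x)| ≤ √(π/2) and |f'(x)| ≤ 2 for all x ∈ ℝ, and f satisfies the Stein equation f'(x) = x·f(x) + h(x) − E[h(N)] for all x ∈ ℝ. -/

import Mathlib

/-!
Write `φ(a) = e^{-a²/2}` and `g = (h - E h(N)) φ`, so that `f(x) = e^{x²/2} ∫_{-∞}^x g`; the Stein
equation is the product rule together with the fundamental theorem of calculus. Since `|g| ≤ φ`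
and `∫ g = 0`, we have `∫_{-∞}^x g = -∫_x^∞ g` for `x ≥ 0`, and by reflection for `x < 0`,
`|∫_{-∞}^x g| ≤ ∫_{|x|}^∞ φ`. For `x ≥ 0` the Gaussian tail satisfies
`e^{x²/2} ∫_x^∞ φ ≤ ∫_0^∞ φ = √(π/2)`, because `e^{x²/2} φ(t + x) ≤ φ(t)` for `t ≥ 0`, and
Mills' bound `∫_x^∞ φ ≤ φ(x)/x`. Hence `|f| ≤ √(π/2)` and `|x f(x)| ≤ 1`, so that
`|f'| ≤ |x f| + |h - E h(N)| ≤ 2`.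
-/

open MeasureTheory ProbabilityTheory Real Set Filter Topology

lemma integrable_exp_neg_sq_div_two : Integrable fun a : ℝ => rexp (-a ^ 2 / 2) := by
  convert integrable_exp_neg_mul_sq (b := 1 / 2) (by norm_num) using 2
  ring_nf

lemma integrable_mul_exp_neg_sq_div_two : Integrable fun a : ℝ => a * rexp (-a ^ 2 / 2) := by
  convert integrable_mul_exp_neg_mul_sq (b := 1 / 2) (by norm_num) using 3
  ring_nf

lemma integral_exp_neg_sq_div_two : ∫ a : ℝ, rexp (-a ^ 2 / 2) = √(2 * π) := by
  convert integral_gaussian (1 / 2) using 2 <;> ring_nf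

lemma integral_Ioi_zero_exp_neg_sq_div_two : ∫ a in Ioi (0 : ℝ), rexp (-a ^ 2 / 2) = √(π / 2) := by
  have h4 : √4 = 2 := by
    rw [show (4 : ℝ) = 2 ^ 2 by norm_num, sqrt_sq zero_le_two]
  calc ∫ a in Ioi (0 : ℝ), rexp (-a ^ 2 / 2) = √(π / (1 / 2)) / 2 := by
        rw [← integral_gaussian_Ioi]; ring_nf
    _ = √(π / 2) := by
        rw [show π / (1 / 2) = π / 2 * 4 by ring, sqrt_mul (by positivity), h4]; ring

lemma integral_Ioi_mul_exp_neg_sq_div_two (x : ℝ) :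
    ∫ a in Ioi x, a * rexp (-a ^ 2 / 2) = rexp (-x ^ 2 / 2) := by
  have hderiv (a : ℝ) : HasDerivAt (fun a : ℝ => -rexp (-a ^ 2 / 2)) (a * rexp (-a ^ 2 / 2)) a := by
    have := (((hasDerivAt_pow 2 a).neg.div_const 2).exp).neg
    simp only [Pi.neg_def, Nat.cast_ofNat] at this
    exact this.congr_deriv (by ring)
  have hlim : Tendsto (fun a : ℝ => -rexp (-a ^ 2 / 2)) atTop (𝓝 0) := by
    simpa using (tendsto_exp_atBot.comp <| (tendsto_neg_atTop_atBot.comp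
      (tendsto_pow_atTop two_ne_zero)).atBot_div_const two_pos).neg
  rw [integral_Ioi_of_hasDerivAt_of_tendsto' (fun a _ => hderiv a)
    integrable_mul_exp_neg_sq_div_two.integrableOn hlim]
  ring

lemma integral_Ioi_exp_neg_sq_div_two_le {x : ℝ} (hx : 0 < x) :
    ∫ a in Ioi x, rexp (-a ^ 2 / 2) ≤ rexp (-x ^ 2 / 2) / x :=
  calc ∫ a in Ioi x, rexp (-a ^ 2 / 2) ≤ ∫ a in Ioi x, x⁻¹ * (a * rexp (-a ^ 2 / 2)) := by
        refine setIntegral_mono_on integrable_exp_neg_sq_div_two.integrableOn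
          (integrable_mul_exp_neg_sq_div_two.integrableOn.const_mul _) measurableSet_Ioi
          fun a (ha : x < a) => ?_
        rw [← mul_assoc]
        refine le_mul_of_one_le_left (exp_nonneg _) ?_
        rw [inv_mul_eq_div, one_le_div hx]
        exact ha.le
    _ = rexp (-x ^ 2 / 2) / x := by
        rw [integral_const_mul, integral_Ioi_mul_exp_neg_sq_div_two, inv_mul_eq_div]

lemma setIntegral_Ioi_eq_setIntegral_Ioi_zero_comp_add (x : ℝ) (F : ℝ → ℝ) :
    ∫ a in Ioi x, F a = ∫ t in Ioi (0 : ℝ), F (t + x) := by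
  have he : MeasurableEmbedding fun t : ℝ => t + x :=
    (Homeomorph.addRight x).isClosedEmbedding.measurableEmbedding
  conv_lhs => rw [← map_add_right_eq_self volume x, he.setIntegral_map]
  congr 1
  ext t
  simp

lemma exp_sq_div_two_mul_integral_Ioi_le {x : ℝ} (hx : 0 ≤ x) :
    rexp (x ^ 2 / 2) * ∫ a in Ioi x, rexp (-a ^ 2 / 2) ≤ √(π / 2) := by
  rw [setIntegral_Ioi_eq_setIntegral_Ioi_zero_comp_add x, ← integral_const_mul,
    ← integral_Ioi_zero_exp_neg_sq_div_two]
  refine setIntegral_mono_on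
    ((integrable_exp_neg_sq_div_two.comp_add_right x).const_mul _).integrableOn
    integrable_exp_neg_sq_div_two.integrableOn measurableSet_Ioi fun t (ht : 0 < t) => ?_
  rw [← exp_add, exp_le_exp]
  nlinarith

lemma integral_gaussianReal_zero_one_eq (h : ℝ → ℝ) :
    ∫ y, h y ∂gaussianReal 0 1 = (√(2 * π))⁻¹ * ∫ a, h a * rexp (-a ^ 2 / 2) := by
  rw [integral_gaussianReal_eq_integral_smul one_ne_zero, ← integral_const_mul]
  congr 1 with a
  simp [gaussianPDFReal]
  ring

lemma hasDerivAt_integral_Iio {g : ℝ → ℝ} (hgc : Continuous g) (hgi : Integrable g) (x : ℝ) :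
    HasDerivAt (fun u => ∫ a in Iio u, g a) (g x) x := by
  have hsplit : (fun u => ∫ a in Iio u, g a) =
      fun u => (∫ a in Iic 0, g a) + ∫ a in (0 : ℝ)..u, g a := by
    ext u
    rw [← integral_Iic_eq_integral_Iio,
      ← intervalIntegral.integral_Iic_sub_Iic hgi.integrableOn hgi.integrableOn]
    ring
  rw [hsplit]
  exact (intervalIntegral.integral_hasDerivAt_right hgi.intervalIntegrable
    (hgc.stronglyMeasurableAtFilter _ _) hgc.continuousAt).const_add _

lemma abs_integral_Iio_le_integral_Ioi_abs {g w : ℝ → ℝ} (hgi : Integrable g) (hg : ∫ a, g a = 0)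
    (hwi : Integrable w) (hw : Function.Even w) (hgw : ∀ a, |g a| ≤ w a) (x : ℝ) :
    |∫ a in Iio x, g a| ≤ ∫ a in Ioi |x|, w a := by
  have hset (s : Set ℝ) (hs : MeasurableSet s) : |∫ a in s, g a| ≤ ∫ a in s, w a :=
    (abs_integral_le_integral_abs).trans <|
      setIntegral_mono_on hgi.abs.integrableOn hwi.integrableOn hs fun a _ => hgw a
  rcases le_or_gt 0 x with hx | hx
  · have hcompl : ∫ a in Iio x, g a = -∫ a in Ici x, g a := by
      linarith [intervalIntegral.integral_Iio_add_Ici hgi.integrableOn hgi.integrableOn (b := x)]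
    rw [hcompl, abs_neg, abs_of_nonneg hx, ← integral_Ici_eq_integral_Ioi]
    exact hset _ measurableSet_Ici
  · have hreflect : ∫ a in Iio x, w a = ∫ a in Ioi (-x), w a := by
      rw [← integral_Iic_eq_integral_Iio, ← integral_comp_neg_Iic]
      simp only [show ∀ a, w (-a) = w a from hw]
    rw [abs_of_neg hx, ← hreflect]
    exact hset _ measurableSet_Iio

noncomputable def steinTransform (g : ℝ → ℝ) (x : ℝ) : ℝ := rexp (x ^ 2 / 2) * ∫ a in Iio x, g a

lemma hasDerivAt_steinTransform {g : ℝ → ℝ} (hgc : Continuous g) (hgi : Integrable g) (x : ℝ) :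
    HasDerivAt (steinTransform g) (x * steinTransform g x + rexp (x ^ 2 / 2) * g x) x := by
  have hexp : HasDerivAt (fun u : ℝ => rexp (u ^ 2 / 2)) (rexp (x ^ 2 / 2) * x) x :=
    ((hasDerivAt_pow 2 x).div_const 2).exp.congr_deriv (by ring)
  refine (hexp.mul (hasDerivAt_integral_Iio hgc hgi x)).congr_deriv ?_
  simp only [steinTransform]
  ring

lemma deriv_steinTransform {g : ℝ → ℝ} (hgc : Continuous g) (hgi : Integrable g) :
    deriv (steinTransform g) = fun x => x * steinTransform g x + rexp (x ^ 2 / 2) * g x :=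
  funext fun x => (hasDerivAt_steinTransform hgc hgi x).deriv

lemma contDiff_one_steinTransform {g : ℝ → ℝ} (hgc : Continuous g) (hgi : Integrable g) :
    ContDiff ℝ 1 (steinTransform g) := by
  have hdiff : Differentiable ℝ (steinTransform g) :=
    fun x => (hasDerivAt_steinTransform hgc hgi x).differentiableAt
  refine contDiff_one_iff_deriv.2 ⟨hdiff, ?_⟩
  rw [deriv_steinTransform hgc hgi]
  have := hdiff.continuous
  fun_prop

section Bounds

variable {g : ℝ → ℝ} (hgi : Integrable g) (hg : ∫ a, g a = 0)
  (hgφ : ∀ a, |g a| ≤ rexp (-a ^ 2 / 2))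
include hgi hg hgφ

lemma abs_integral_Iio_le_integral_Ioi_exp (x : ℝ) :
    |∫ a in Iio x, g a| ≤ ∫ a in Ioi |x|, rexp (-a ^ 2 / 2) :=
  abs_integral_Iio_le_integral_Ioi_abs hgi hg integrable_exp_neg_sq_div_two
    (fun a => by simp only [neg_sq]) hgφ x

lemma abs_steinTransform_le (x : ℝ) : |steinTransform g x| ≤ √(π / 2) := by
  rw [steinTransform, abs_mul, abs_of_pos (exp_pos _), ← sq_abs x]
  exact (mul_le_mul_of_nonneg_left (abs_integral_Iio_le_integral_Ioi_exp hgi hg hgφ x)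
    (exp_nonneg _)).trans (exp_sq_div_two_mul_integral_Ioi_le (abs_nonneg x))

lemma abs_mul_steinTransform_le_one (x : ℝ) : |x * steinTransform g x| ≤ 1 := by
  rcases eq_or_ne x 0 with rfl | hx
  · simp
  have hx' : 0 < |x| := abs_pos.mpr hx
  rw [steinTransform, abs_mul, abs_mul, abs_of_pos (exp_pos _), ← sq_abs x]
  calc |x| * (rexp (|x| ^ 2 / 2) * |∫ a in Iio x, g a|)
      ≤ |x| * (rexp (|x| ^ 2 / 2) * (rexp (-|x| ^ 2 / 2) / |x|)) := by
        gcongr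
        exact (abs_integral_Iio_le_integral_Ioi_exp hgi hg hgφ x).trans
          (integral_Ioi_exp_neg_sq_div_two_le hx')
    _ = 1 := by
        field_simp
        rw [← exp_add]
        simp

end Bounds

lemma integral_mem_Icc_zero_one {Ω : Type*} [MeasurableSpace Ω] {μ : Measure Ω}
    [IsProbabilityMeasure μ] {h : Ω → ℝ} (hrange : ∀ x, h x ∈ Icc (0 : ℝ) 1) :
    ∫ x, h x ∂μ ∈ Icc (0 : ℝ) 1 := by
  refine ⟨integral_nonneg fun x => (hrange x).1, ?_⟩
  calc ∫ x, h x ∂μ ≤ ∫ _, (1 : ℝ) ∂μ :=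
        integral_mono_of_nonneg (ae_of_all _ fun x => (hrange x).1) (integrable_const 1)
          (ae_of_all _ fun x => (hrange x).2)
    _ = 1 := by simp

lemma integral_sub_integral_gaussianReal_mul_exp_eq_zero {h : ℝ → ℝ}
    (hi : Integrable fun a => h a * rexp (-a ^ 2 / 2)) :
    ∫ a, (h a - ∫ y, h y ∂gaussianReal 0 1) * rexp (-a ^ 2 / 2) = 0 := by
  simp_rw [sub_mul]
  rw [integral_sub hi (integrable_exp_neg_sq_div_two.const_mul _), integral_const_mul,
    integral_exp_neg_sq_div_two, integral_gaussianReal_zero_one_eq]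
  have : √(2 * π) ≠ 0 := by positivity
  field_simp
  ring

theorem stein_lemma (h : ℝ → ℝ) (hcont : Continuous h)
    (hrange : ∀ x, h x ∈ Icc (0 : ℝ) 1) :
    ∀ f : ℝ → ℝ,
      (f = fun x => Real.exp (x ^ 2 / 2) *
        ∫ a in Iio x, (h a - ∫ y, h y ∂(gaussianReal 0 1)) * Real.exp (-a ^ 2 / 2)) →
      ContDiff ℝ 1 f ∧
      (∀ x, |f x| ≤ Real.sqrt (π / 2)) ∧
      (∀ x, |deriv f x| ≤ 2) ∧
      (∀ x, deriv f x = x * f x + h x - ∫ y, h y ∂(gaussianReal 0 1)) := by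
  intro f hf
  set c := ∫ y, h y ∂gaussianReal 0 1
  set g : ℝ → ℝ := fun a => (h a - c) * rexp (-a ^ 2 / 2)
  have hfg : f = steinTransform g := hf
  obtain ⟨hc0, hc1⟩ : c ∈ Icc (0 : ℝ) 1 := integral_mem_Icc_zero_one hrange
  have hhc (x : ℝ) : |h x - c| ≤ 1 := abs_sub_le_of_nonneg_of_le (hrange x).1 (hrange x).2 hc0 hc1
  have hgφ (a : ℝ) : |g a| ≤ rexp (-a ^ 2 / 2) := by
    rw [abs_mul, abs_of_pos (exp_pos _)]
    exact mul_le_of_le_one_left (exp_nonneg _) (hhc a)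
  have hgc : Continuous g := by fun_prop
  have hgi : Integrable g :=
    integrable_exp_neg_sq_div_two.bdd_mul (by fun_prop) (ae_of_all _ hhc)
  have hg : ∫ a, g a = 0 := integral_sub_integral_gaussianReal_mul_exp_eq_zero <|
    integrable_exp_neg_sq_div_two.bdd_mul hcont.aestronglyMeasurable
      (ae_of_all _ fun a => abs_le.2 ⟨by linarith [(hrange a).1], (hrange a).2⟩)
  have hderiv (x : ℝ) : deriv f x = x * f x + (h x - c) := by
    rw [hfg, deriv_steinTransform hgc hgi]
    simp only [g]
    rw [mul_left_comm, ← exp_add, neg_div, add_neg_cancel, exp_zero, mul_one]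
  refine ⟨hfg ▸ contDiff_one_steinTransform hgc hgi, hfg ▸ abs_steinTransform_le hgi hg hgφ,
    fun x => ?_, fun x => by rw [hderiv]; ring⟩
  rw [hderiv]
  calc |x * f x + (h x - c)| ≤ |x * f x| + |h x - c| := abs_add_le _ _
    _ ≤ 1 + 1 := add_le_add (hfg ▸ abs_mul_steinTransform_le_one hgi hg hgφ x) (hhc x)
    _ = 2 := by norm_num
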